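/- The Roman bondage number of the cycle C_5 on five vertices equals 3. -/

import Mathlib

/-!
`γ_R(C₅) = 4`: putting `2` on two nonadjacent vertices dominates the cycle, and no function of
weight `3` does. Since `γ_R` can only grow when edges are deleted, it suffices to see that
deleting at most two edges leaves `C₅`, `P₅`, `K₁ ∪ P₄` or `P₂ ∪ P₃`, each of Roman domination
number `4`, while deleting the edges `01`, `23`, `40` leaves `K₁ ∪ P₂ ∪ P₂`, of Roman domination
number `5`. The finitely many checks on the five vertices are left to `decide`.
-/

open SimpleGraph

/-- The Roman domination number: the minimum weight of a Roman dominating function,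
i.e. a function `f : V → ℕ` with values in `{0,1,2}` such that every vertex with
value `0` has a neighbor with value `2`. -/
noncomputable def romanDominationNumber {V : Type*} [Fintype V] (G : SimpleGraph V) : ℕ :=
  sInf {w | ∃ f : V → ℕ, (∀ v, f v ≤ 2) ∧
    (∀ v, f v = 0 → ∃ u, G.Adj v u ∧ f u = 2) ∧ w = ∑ v, f v}

/-- The Roman bondage number: the minimum cardinality of a set `B` of edges of `G`
whose removal increases the Roman domination number. -/
noncomputable def romanBondageNumber {V : Type*} [Fintype V] (G : SimpleGraph V) : ℕ :=
  sInf {k | ∃ B : Finset (Sym2 V), ↑B ⊆ G.edgeSet ∧ B.card = k ∧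
    romanDominationNumber G < romanDominationNumber (G.deleteEdges ↑B)}

open Finset

section RomanDomination

variable {V : Type*} {G H : SimpleGraph V}

/-- Roman dominating functions are taken `Fin 3`-valued, so that for a finite graph the
statements about all of them are decidable. -/
def IsRomanDominating (G : SimpleGraph V) (f : V → Fin 3) : Prop :=
  ∀ v, f v = 0 → ∃ u, G.Adj v u ∧ f u = 2

instance [Fintype V] [DecidableRel G.Adj] : DecidablePred (IsRomanDominating G) :=
  fun _ => by unfold IsRomanDominating; infer_instance

theorem IsRomanDominating.mono {f : V → Fin 3} (hf : IsRomanDominating G f) (hGH : G ≤ H) :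
    IsRomanDominating H f := fun v hv =>
  let ⟨u, hvu, hu⟩ := hf v hv
  ⟨u, hGH hvu, hu⟩

variable [Fintype V]

theorem romanDominationNumber_le {f : V → Fin 3} (hf : IsRomanDominating G f) :
    romanDominationNumber G ≤ ∑ v, (f v : ℕ) := by
  refine Nat.sInf_le ⟨fun v => f v, fun v => Nat.le_of_lt_succ (f v).isLt, fun v hv => ?_, rfl⟩
  obtain ⟨u, hvu, hu⟩ := hf v (Fin.ext hv)
  exact ⟨u, hvu, by simp [hu]⟩

theorem le_romanDominationNumber {n : ℕ}
    (h : ∀ f : V → Fin 3, IsRomanDominating G f → n ≤ ∑ v, (f v : ℕ)) :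
    n ≤ romanDominationNumber G := by
  refine le_csInf ⟨_, fun _ => 2, fun _ => le_rfl, fun v hv => by simp at hv, rfl⟩ ?_
  rintro w ⟨f, hf2, hfdom, rfl⟩
  let g : V → Fin 3 := fun v => ⟨f v, Nat.lt_succ_of_le (hf2 v)⟩
  have hg : IsRomanDominating G g := fun v hv => by
    obtain ⟨u, hvu, hu⟩ := hfdom v (congrArg Fin.val hv)
    exact ⟨u, hvu, Fin.ext hu⟩
  exact h g hg

theorem romanDominationNumber_anti (hGH : G ≤ H) :
    romanDominationNumber H ≤ romanDominationNumber G :=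
  le_romanDominationNumber fun _ hf => romanDominationNumber_le (hf.mono hGH)

theorem romanBondageNumber_eq {k : ℕ}
    (hbond : ∃ B : Finset (Sym2 V), ↑B ⊆ G.edgeSet ∧ B.card = k ∧
      romanDominationNumber G < romanDominationNumber (G.deleteEdges ↑B))
    (hsmall : ∀ B : Finset (Sym2 V), ↑B ⊆ G.edgeSet → B.card < k →
      romanDominationNumber (G.deleteEdges ↑B) ≤ romanDominationNumber G) :
    romanBondageNumber G = k := by
  refine le_antisymm (Nat.sInf_le hbond) (le_csInf ⟨k, hbond⟩ ?_)
  rintro _ ⟨B, hBG, rfl, hlt⟩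
  by_contra! hB
  exact (hsmall B hBG hB).not_gt hlt

end RomanDomination

theorem Finset.exists_subset_pair_of_card_le_two {α ι : Type*} [DecidableEq α] [Nonempty ι]
    {φ : ι → α} {B : Finset α} (hB : ∀ e ∈ B, ∃ i, e = φ i) (hcard : B.card ≤ 2) :
    ∃ i j, B ⊆ {φ i, φ j} := by
  obtain h | h | h : B.card = 0 ∨ B.card = 1 ∨ B.card = 2 := by omega
  · obtain ⟨i⟩ := ‹Nonempty ι›
    exact ⟨i, i, by simp [card_eq_zero.mp h]⟩
  · obtain ⟨a, rfl⟩ := card_eq_one.mp h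
    obtain ⟨i, rfl⟩ := hB a (mem_singleton_self a)
    exact ⟨i, i, by simp⟩
  · obtain ⟨a, b, -, rfl⟩ := card_eq_two.mp h
    obtain ⟨i, rfl⟩ := hB a (by simp)
    obtain ⟨j, rfl⟩ := hB b (by simp)
    exact ⟨i, j, Subset.refl _⟩

theorem exists_eq_of_mem_edgeSet_cycleGraph {n : ℕ} {e : Sym2 (Fin (n + 2))}
    (he : e ∈ (cycleGraph (n + 2)).edgeSet) : ∃ i, e = s(i, i + 1) := by
  induction e using Sym2.ind with
  | _ a b =>
    rw [mem_edgeSet, cycleGraph_adj] at he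
    rcases he with h | h
    · exact ⟨b, by rw [sub_eq_iff_eq_add'.mp h, Sym2.eq_swap]⟩
    · exact ⟨a, by rw [sub_eq_iff_eq_add'.mp h]⟩

set_option maxRecDepth 40000 in
theorem romanDominationNumber_cycleGraph_five : romanDominationNumber (cycleGraph 5) = 4 :=
  le_antisymm (romanDominationNumber_le (f := ![2, 0, 0, 2, 0]) (by decide))
    (le_romanDominationNumber (by decide))

/-- Deleting `s(i, i + 1)` and `s(j, j + 1)` from `C₅` leaves a spanning supergraph of `P₅`
(`j - i ∈ {0, 4}`), of `K₁ ∪ P₄` (`j - i = 1`, isolating `i + 1`) or of `P₂ ∪ P₃`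
(`j - i ∈ {2, 3}`); this is a Roman dominating function of weight `4` on it. -/
def romanFunctionAvoiding (i j : Fin 5) : Fin 5 → Fin 3 :=
  if j - i = 1 then fun v => if v - i = 3 then 2 else if v - i = 1 ∨ v - i = 0 then 1 else 0
  else if j - i = 2 then fun v => if v - i = 2 ∨ v - i = 4 then 2 else 0
  else fun v => if v - i = 2 then 2 else if v - i = 4 ∨ v - i = 0 then 1 else 0

theorem romanDominationNumber_cycleGraph_five_deleteEdges_pair (i j : Fin 5) :
    romanDominationNumber
      ((cycleGraph 5).deleteEdges ↑({s(i, i + 1), s(j, j + 1)} : Finset (Sym2 (Fin 5)))) ≤ 4 := by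
  have hwitness : ∀ i j : Fin 5, IsRomanDominating
      ((cycleGraph 5).deleteEdges ↑({s(i, i + 1), s(j, j + 1)} : Finset (Sym2 (Fin 5))))
      (romanFunctionAvoiding i j) ∧ ∑ v, (romanFunctionAvoiding i j v : ℕ) = 4 := by
    decide
  exact (romanDominationNumber_le (hwitness i j).1).trans_eq (hwitness i j).2

theorem romanDominationNumber_cycleGraph_five_deleteEdges_le {B : Finset (Sym2 (Fin 5))}
    (hB : ↑B ⊆ (cycleGraph 5).edgeSet) (hcard : B.card ≤ 2) :
    romanDominationNumber ((cycleGraph 5).deleteEdges ↑B) ≤ 4 := by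
  obtain ⟨i, j, hij⟩ := exists_subset_pair_of_card_le_two
    (fun e he => exists_eq_of_mem_edgeSet_cycleGraph (hB he)) hcard
  exact (romanDominationNumber_anti (deleteEdges_anti (coe_subset.mpr hij))).trans
    (romanDominationNumber_cycleGraph_five_deleteEdges_pair i j)

set_option maxRecDepth 40000 in
theorem romanDominationNumber_cycleGraph_five_deleteEdges_triple :
    5 ≤ romanDominationNumber
      ((cycleGraph 5).deleteEdges ↑({s(0, 1), s(2, 3), s(4, 0)} : Finset (Sym2 (Fin 5)))) :=
  le_romanDominationNumber (by decide)

/-- The Roman bondage number of the cycle `C₅` is `3`. -/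
theorem roman_bondage_C5 :
    romanBondageNumber (SimpleGraph.cycleGraph 5) = 3 := by
  refine romanBondageNumber_eq ⟨{s(0, 1), s(2, 3), s(4, 0)}, ?_, by decide, ?_⟩
    fun B hB hcard => ?_
  · simp only [coe_insert, coe_singleton, Set.insert_subset_iff, Set.singleton_subset_iff]
    decide
  · rw [romanDominationNumber_cycleGraph_five]
    exact romanDominationNumber_cycleGraph_five_deleteEdges_triple
  · rw [romanDominationNumber_cycleGraph_five]
    exact romanDominationNumber_cycleGraph_five_deleteEdges_le hB (by omega)
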